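/- The tensor rank of n copies of the k-partite W state satisfies rk(W^{⊗n}) ≤ (n(k−1)+1)·2^n. -/
import Mathlib


open scoped BigOperators

namespace Paper

def Restricts {k : ℕ} {ι κ : Fin k → Type} [∀ i, Fintype (ι i)] [∀ i, Fintype (κ i)]
    (ψ : ((i : Fin k) → ι i) → ℂ) (φ : ((i : Fin k) → κ i) → ℂ) : Prop :=
  ∃ A : (i : Fin k) → κ i → ι i → ℂ,
    ∀ v, φ v = ∑ w : (i : Fin k) → ι i, (∏ i, A i (v i) (w i)) * ψ w

def pow {k : ℕ} {ι : Fin k → Type} (ψ : ((i : Fin k) → ι i) → ℂ) (m : ℕ) :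
    ((i : Fin k) → (Fin m → ι i)) → ℂ :=
  fun v => ∏ j : Fin m, ψ (fun i => v i j)

def tprod {k : ℕ} {ι κ : Fin k → Type} (ψ : ((i : Fin k) → ι i) → ℂ)
    (φ : ((i : Fin k) → κ i) → ℂ) : ((i : Fin k) → ι i × κ i) → ℂ :=
  fun v => ψ (fun i => (v i).1) * φ (fun i => (v i).2)

noncomputable def omegaN {k : ℕ} {ι κ : Fin k → Type} [∀ i, Fintype (ι i)] [∀ i, Fintype (κ i)]
    (ψ : ((i : Fin k) → ι i) → ℂ) (φ : ((i : Fin k) → κ i) → ℂ) (n : ℕ) : ℝ :=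
  ((sInf {m : ℕ | Restricts (pow ψ m) (pow φ n)} : ℕ) : ℝ) / n

noncomputable def omega {k : ℕ} {ι κ : Fin k → Type} [∀ i, Fintype (ι i)] [∀ i, Fintype (κ i)]
    (ψ : ((i : Fin k) → ι i) → ℂ) (φ : ((i : Fin k) → κ i) → ℂ) : ℝ :=
  ⨅ n : ℕ+, omegaN ψ φ n

def GHZ (k a : ℕ) : ((_ : Fin k) → Fin a) → ℂ :=
  fun v => if ∀ i j : Fin k, v i = v j then 1 else 0

def W (k : ℕ) : ((_ : Fin k) → Fin 2) → ℂ :=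
  fun v => if (Finset.univ.filter fun i => v i = 1).card = 1 then 1 else 0

def rankLE {k : ℕ} {ι : Fin k → Type} (T : ((i : Fin k) → ι i) → ℂ) (r : ℕ) : Prop :=
  ∃ u : Fin r → (i : Fin k) → ι i → ℂ, ∀ v, T v = ∑ s : Fin r, ∏ i, u s i (v i)

noncomputable def trank {k : ℕ} {ι : Fin k → Type} (T : ((i : Fin k) → ι i) → ℂ) : ℕ :=
  sInf {r | rankLE T r}

open Polynomial Finset in
lemma lagrange_weights (N : ℕ) : ∃ c : Fin (N+1) → ℂ, ∀ d : ℕ, d ≤ N →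
    ∑ a : Fin (N+1), c a * ((a : ℕ) + 1 : ℂ) ^ d = if d = 0 then 1 else 0 := by
  set v : Fin (N+1) → ℂ := fun a => ((a : ℕ) + 1 : ℂ) with hv
  have hinj : Set.InjOn v (Finset.univ : Finset (Fin (N+1))) := by
    intro a _ b _ h
    have : ((a : ℕ) : ℂ) = ((b : ℕ) : ℂ) := by
      simpa [hv] using h
    exact Fin.ext (by exact_mod_cast this)
  refine ⟨fun a => (Lagrange.basis Finset.univ v a).eval 0, fun d hd => ?_⟩
  have hdeg : (X ^ d : ℂ[X]).degree < (Finset.univ : Finset (Fin (N+1))).card := by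
    simp only [degree_X_pow, Finset.card_univ, Fintype.card_fin]
    exact_mod_cast Nat.lt_succ_of_le hd
  have h := Lagrange.eq_interpolate (f := (X ^ d : ℂ[X])) hinj hdeg
  have h0 := congrArg (Polynomial.eval (0 : ℂ)) h
  simp only [Lagrange.interpolate_apply, eval_finset_sum, eval_mul, eval_C, eval_pow, eval_X] at h0
  have h1 : ∑ a : Fin (N+1), (Lagrange.basis Finset.univ v a).eval 0 * v a ^ d = (0:ℂ) ^ d := by
    rw [h0]; exact Finset.sum_congr rfl (fun _ _ => mul_comm _ _)
  rw [show (fun a : Fin (N+1) => ((a:ℕ)+1:ℂ)) = v from rfl] at *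
  simp only [hv] at h1 ⊢
  rw [h1]
  rcases Nat.eq_zero_or_pos d with rfl | hdp
  · simp
  · simp [zero_pow (Nat.pos_iff_ne_zero.mp hdp), Nat.pos_iff_ne_zero.mp hdp]

lemma rankLE_of_indexed {k : ℕ} {ι : Fin k → Type} (T : ((i : Fin k) → ι i) → ℂ)
    (σ : Type) [Fintype σ] (u : σ → (i : Fin k) → ι i → ℂ)
    (h : ∀ v, T v = ∑ s : σ, ∏ i, u s i (v i)) : rankLE T (Fintype.card σ) := by
  refine ⟨fun s => u ((Fintype.equivFin σ).symm s), fun v => ?_⟩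
  rw [h v, ← Equiv.sum_comp (Fintype.equivFin σ).symm (fun s => ∏ i, u s i (v i))]

/-- Tensor rank bound for powers of the k-partite W state:
rk(W^{⊗n}) ≤ (n(k−1)+1)·2^n. -/
theorem trank_W_pow_le (k n : ℕ) (hk : 2 ≤ k) :
    trank (pow (W k) n) ≤ (n * (k - 1) + 1) * 2 ^ n := by
  obtain ⟨c, hc⟩ := lagrange_weights (n * (k-1))
  set ε : Fin (n * (k - 1) + 1) → ℂ := fun a => ((a:ℕ)+1 : ℂ) with hε
  have hεne : ∀ a, ε a ≠ 0 := fun a => by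
    simpa [hε] using Nat.cast_add_one_ne_zero (R := ℂ) (a:ℕ)
  set i₀ : Fin k := ⟨0, by omega⟩ with hi₀
  set base : Fin (n * (k - 1) + 1) → Fin 2 → Fin 2 → ℂ := fun a b x =>
    if b = 1 then (if x = 1 then ε a else 1) else (if x = 0 then 1 else 0) with hbase
  set u : (Fin (n * (k - 1) + 1) × (Fin n → Fin 2)) → (i : Fin k) → (Fin n → Fin 2) → ℂ := fun s i x =>
    (if i = i₀ then c s.1 * ∏ j, (if s.2 j = 1 then (ε s.1)⁻¹ else -(ε s.1)⁻¹) else 1) *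
      ∏ j, base s.1 (s.2 j) (x j) with hu
  have key : ∀ v, pow (W k) n v = ∑ s : Fin (n * (k - 1) + 1) × (Fin n → Fin 2), ∏ i, u s i (v i) := by
    intro v
    set C : Fin n → ℕ := fun j => (Finset.univ.filter fun i => v i j = 1).card with hC
    -- product of base over legs
    have hprod_base : ∀ (a : Fin (n * (k - 1) + 1)) (t : Fin 2) (j : Fin n),
        (∏ i : Fin k, base a t (v i j)) =
          if t = 1 then ε a ^ C j else (if C j = 0 then 1 else 0) := by
      intro a t j
      have h2 : ∀ x : Fin 2, (x = 0) ↔ ¬(x = 1) := by decide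
      fin_cases t
      · simp only [hbase]
        norm_num
        rw [Finset.prod_boole]
        have : (∀ i : Fin k, v i j = 0) ↔ C j = 0 := by
          rw [hC]
          simp only [Finset.card_eq_zero, Finset.filter_eq_empty_iff, Finset.mem_univ,
            true_implies]
          exact forall_congr' fun i => h2 (v i j)
        simp only [Finset.mem_univ, true_implies]
        by_cases hall : ∀ i : Fin k, v i j = 0
        · rw [if_pos hall, if_pos (this.mp hall)]
        · rw [if_neg hall, if_neg (fun hc0 => hall (this.mpr hc0))]
      · simp only [hbase]
        norm_num
        rw [Finset.prod_ite, Finset.prod_const, Finset.prod_const, one_pow, mul_one, hC]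
    -- sign * base-product per column, as function of the bit
    set F : Fin (n * (k - 1) + 1) → Fin n → Fin 2 → ℂ := fun a j t =>
      (if t = 1 then (ε a)⁻¹ else -(ε a)⁻¹) *
        (if t = 1 then ε a ^ C j else (if C j = 0 then 1 else 0)) with hF
    set G : Fin (n * (k - 1) + 1) → Fin n → ℂ := fun a j =>
      (ε a)⁻¹ * (ε a ^ C j - if C j = 0 then 1 else 0) with hG
    have hterm : ∀ (a : Fin (n * (k - 1) + 1)) (b : Fin n → Fin 2),
        (∏ i, u (a, b) i (v i)) = c a * ∏ j, F a j (b j) := by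
      intro a b
      calc (∏ i, u (a, b) i (v i))
          = (∏ i : Fin k, (if i = i₀ then c a *
                ∏ j, (if b j = 1 then (ε a)⁻¹ else -(ε a)⁻¹) else 1)) *
              ∏ i : Fin k, ∏ j, base a (b j) (v i j) := by
            rw [hu, ← Finset.prod_mul_distrib]
        _ = (c a * ∏ j, (if b j = 1 then (ε a)⁻¹ else -(ε a)⁻¹)) *
              ∏ j, ∏ i : Fin k, base a (b j) (v i j) := by
            rw [Finset.prod_ite_eq' Finset.univ i₀, if_pos (Finset.mem_univ i₀),
              Finset.prod_comm]
        _ = (c a * ∏ j, (if b j = 1 then (ε a)⁻¹ else -(ε a)⁻¹)) *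
              ∏ j, (if b j = 1 then ε a ^ C j else (if C j = 0 then 1 else 0)) := by
            rw [Finset.prod_congr rfl fun j _ => hprod_base a (b j) j]
        _ = c a * ∏ j, F a j (b j) := by
            rw [hF, mul_assoc, ← Finset.prod_mul_distrib]
    have hsumF : ∀ (a : Fin (n * (k - 1) + 1)) (j : Fin n), ∑ t : Fin 2, F a j t = G a j := by
      intro a j
      rw [Fin.sum_univ_two, hF, hG]
      norm_num
      by_cases hC0 : C j = 0 <;> simp [hC0] 
    have hRHS : ∑ s : Fin (n * (k - 1) + 1) × (Fin n → Fin 2), ∏ i, u s i (v i)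
        = ∑ a : Fin (n * (k - 1) + 1), c a * ∏ j, G a j := by
      rw [Fintype.sum_prod_type]
      refine Finset.sum_congr rfl fun a _ => ?_
      calc ∑ b : Fin n → Fin 2, ∏ i, u (a, b) i (v i)
          = ∑ b : Fin n → Fin 2, c a * ∏ j, F a j (b j) := by
            exact Finset.sum_congr rfl fun b _ => hterm a b
        _ = c a * ∑ b : Fin n → Fin 2, ∏ j, F a j (b j) := by rw [Finset.mul_sum]
        _ = c a * ∏ j, ∑ t : Fin 2, F a j t := by
            rw [Finset.prod_univ_sum]
            rw [Fintype.piFinset_univ]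
        _ = c a * ∏ j, G a j := by
            rw [Finset.prod_congr rfl fun j _ => hsumF a j]
    rw [hRHS]
    have hLHS : pow (W k) n v = ∏ j, (if C j = 1 then (1:ℂ) else 0) := rfl
    by_cases h0 : ∃ j, C j = 0
    · obtain ⟨j0, hj0⟩ := h0
      have hGz : ∀ a, ∏ j, G a j = 0 := fun a =>
        Finset.prod_eq_zero (Finset.mem_univ j0) (by simp [hG, hj0])
      have : pow (W k) n v = 0 :=
        hLHS.trans (Finset.prod_eq_zero (Finset.mem_univ j0) (by simp [hj0]))
      simp [this, hGz]
    · push_neg at h0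
      have hCk : ∀ j, C j ≤ k := fun j =>
        le_trans (Finset.card_filter_le _ _) (by simp)
      set d := ∑ j, (C j - 1) with hd
      have hGd : ∀ a, ∏ j, G a j = ε a ^ d := by
        intro a
        rw [hd, ← Finset.prod_pow_eq_pow_sum]
        refine Finset.prod_congr rfl fun j _ => ?_
        have h1 : C j ≠ 0 := h0 j
        have : G a j = (ε a)⁻¹ * ε a ^ C j := by simp [hG, h1]
        rw [this, show C j = (C j - 1) + 1 by omega, pow_succ]
        calc (ε a)⁻¹ * (ε a ^ (C j - 1) * ε a)
            = ε a ^ (C j - 1) * ((ε a)⁻¹ * ε a) := by ring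
          _ = ε a ^ (C j - 1) := by rw [inv_mul_cancel₀ (hεne a), mul_one]
      have hdle : d ≤ n * (k - 1) := by
        rw [hd]
        calc ∑ j : Fin n, (C j - 1) ≤ ∑ _j : Fin n, (k - 1) :=
              Finset.sum_le_sum fun j _ => by have := hCk j; omega
          _ = n * (k - 1) := by simp [Finset.sum_const]
      have hmain : ∑ a : Fin (n * (k - 1) + 1), c a * ∏ j, G a j = if d = 0 then 1 else 0 := by
        rw [Finset.sum_congr rfl fun a _ => by rw [hGd a]]
        exact hc d hdle
      rw [hmain, hLHS]
      have hd0 : d = 0 ↔ ∀ j : Fin n, C j = 1 := by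
        rw [hd, Finset.sum_eq_zero_iff]
        constructor
        · intro h j; have := h j (Finset.mem_univ j); have := h0 j; omega
        · intro h j _; have := h j; omega

      by_cases hall : ∀ j : Fin n, C j = 1
      · rw [if_pos (hd0.mpr hall)]
        rw [Finset.prod_congr rfl fun j _ => if_pos (hall j), Finset.prod_const_one]
      · rw [if_neg (fun h => hall (hd0.mp h))]
        push_neg at hall
        obtain ⟨j1, hj1⟩ := hall
        exact Finset.prod_eq_zero (Finset.mem_univ j1) (if_neg hj1)
  have h := rankLE_of_indexed _ _ u key
  have hcard : Fintype.card (Fin (n * (k - 1) + 1) × (Fin n → Fin 2)) = (n * (k - 1) + 1) * 2^n := by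
    simp [Fintype.card_prod]
  rw [hcard] at h
  exact Nat.sInf_le h

end Paper
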